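/- Let α ∈ ℝ, s > 0 and l = h^{2+s}. Define A(h) and W(h) = A(h) + 2a₂c₂R² as above (a₂ = −αh^{2+2s}, c₂ = α/h², R the Neumann second-difference matrix). Then there exists h₀ > 0 such that for all 0 < h < h₀ the Lyapunov operator X ↦ W(h)X + XA(h) on M_{(J+1)}(ℝ) is invertible. -/

import Mathlib

/-- The tridiagonal matrix of the scheme: diagonal `1/2 + 2ασ`, off-diagonals `-ασ`,
with the `(0,1)` and `(J, J-1)` entries doubled. -/
noncomputable def Amat (α σ : ℝ) (J : ℕ) : Matrix (Fin (J+1)) (Fin (J+1)) ℝ :=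
  Matrix.of fun i j =>
    if (i : ℕ) = (j : ℕ) then 1/2 + 2*α*σ
    else if ((i : ℕ) = 0 ∧ (j : ℕ) = 1) ∨ ((i : ℕ) = J ∧ (j : ℕ) = J - 1) then 2*(-(α*σ))
    else if (i : ℕ) + 1 = (j : ℕ) ∨ (j : ℕ) + 1 = (i : ℕ) then -(α*σ)
    else 0

/-- The Neumann second-difference matrix: diagonal `-2`, off-diagonals `1`, with
`R_{0,1} = R_{J,J-1} = 2`. -/
def Rmat (J : ℕ) : Matrix (Fin (J+1)) (Fin (J+1)) ℝ :=
  Matrix.of fun i j =>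
    if (i : ℕ) = (j : ℕ) then -2
    else if ((i : ℕ) = 0 ∧ (j : ℕ) = 1) ∨ ((i : ℕ) = J ∧ (j : ℕ) = J - 1) then 2
    else if (i : ℕ) + 1 = (j : ℕ) ∨ (j : ℕ) + 1 = (i : ℕ) then 1
    else 0

noncomputable def Lop (α : ℝ) (J : ℕ) (σ c : ℝ) :
    Matrix (Fin (J+1)) (Fin (J+1)) ℝ →ₗ[ℝ] Matrix (Fin (J+1)) (Fin (J+1)) ℝ :=
  LinearMap.mulLeft ℝ (Amat α σ J + c • Rmat J ^ 2) + LinearMap.mulRight ℝ (Amat α σ J)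

lemma Amat_zero (α : ℝ) (J : ℕ) : Amat α 0 J = (1/2 : ℝ) • 1 := by
  ext i j
  simp only [Amat, Matrix.of_apply, Matrix.smul_apply, Matrix.one_apply, smul_eq_mul, mul_zero,
    mul_one, neg_zero, Fin.val_eq_val]
  split_ifs <;> simp_all

lemma Lop_zero (α : ℝ) (J : ℕ) : Lop α J 0 0 = LinearMap.id := by
  ext X
  simp [Lop, Amat_zero, Matrix.smul_mul, Matrix.mul_smul]
  ring

lemma continuous_Amat (α : ℝ) (J : ℕ) : Continuous fun σ => Amat α σ J := by
  apply continuous_matrix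
  intro i j
  simp only [Amat, Matrix.of_apply]
  split_ifs <;> fun_prop

noncomputable def detL (α : ℝ) (J : ℕ) (p : ℝ × ℝ) : ℝ :=
  LinearMap.det (Lop α J p.1 p.2)

lemma continuous_detL (α : ℝ) (J : ℕ) : Continuous (detL α J) := by
  classical
  set n := Fin (J+1)
  set b : Module.Basis (n × n) ℝ (Matrix n n ℝ) := Matrix.stdBasis ℝ n n with hb
  set ML : Matrix n n ℝ →ₗ[ℝ] Matrix (n × n) (n × n) ℝ :=
    (LinearMap.toMatrix b b).toLinearMap ∘ₗ (LinearMap.mul ℝ (Matrix n n ℝ)) with hML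
  set MR : Matrix n n ℝ →ₗ[ℝ] Matrix (n × n) (n × n) ℝ :=
    (LinearMap.toMatrix b b).toLinearMap ∘ₗ (LinearMap.mul ℝ (Matrix n n ℝ)).flip with hMR
  have key : ∀ p : ℝ × ℝ, detL α J p =
      (ML (Amat α p.1 J + p.2 • Rmat J ^ 2) + MR (Amat α p.1 J)).det := by
    intro p
    have h1 : LinearMap.mul ℝ (Matrix n n ℝ) (Amat α p.1 J + p.2 • Rmat J ^ 2)
        = LinearMap.mulLeft ℝ (Amat α p.1 J + p.2 • Rmat J ^ 2) := by
      ext x; simp [Matrix.add_mul, Matrix.smul_mul]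
    have h2 : (LinearMap.mul ℝ (Matrix n n ℝ)).flip (Amat α p.1 J)
        = LinearMap.mulRight ℝ (Amat α p.1 J) := by ext x; simp
    rw [detL, ← LinearMap.det_toMatrix b, Lop, map_add]
    simp only [hML, hMR, LinearMap.comp_apply, LinearEquiv.coe_toLinearMap, h1, h2]
  simp only [funext key]
  apply Continuous.matrix_det
  have hA : Continuous fun p : ℝ × ℝ => Amat α p.1 J := (continuous_Amat α J).comp continuous_fst
  have hW : Continuous fun p : ℝ × ℝ => Amat α p.1 J + p.2 • Rmat J ^ 2 :=
    hA.add (continuous_snd.smul continuous_const)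
  exact (ML.continuous_of_finiteDimensional.comp hW).add
    (MR.continuous_of_finiteDimensional.comp hA)

/-- With `a₂ = -αh^(2+2s)`, `c₂ = α/h²`, `W(h) = A(h) + 2a₂c₂R²`, there exists `h₀ > 0`
such that for all `0 < h < h₀` the Lyapunov operator `X ↦ W(h)X + XA(h)` is invertible. -/
theorem stmt8 (α s : ℝ) (hs : 0 < s) (J : ℕ) :
    ∃ h₀ : ℝ, 0 < h₀ ∧ ∀ h : ℝ, 0 < h → h < h₀ →
      Function.Bijective
        (fun X : Matrix (Fin (J+1)) (Fin (J+1)) ℝ =>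
          (Amat α (h ^ (2 + 2*s)) J
            + (2 * (-(α * h ^ (2 + 2*s))) * (α / h ^ 2)) • (Rmat J) ^ 2) * X
          + X * Amat α (h ^ (2 + 2*s)) J) := by
  classical
  -- the parameter map
  set φ : ℝ → ℝ × ℝ := fun h => (h ^ (2 + 2*s), 2 * (-(α * h ^ (2 + 2*s))) * (α / h ^ 2))
    with hφ
  have h2s : (0:ℝ) < 2 + 2*s := by linarith
  have hσ : Filter.Tendsto (fun h : ℝ => h ^ (2 + 2*s)) (nhdsWithin 0 (Set.Ioi 0)) (nhds 0) := by
    have := (Real.continuousAt_rpow_const 0 (2 + 2*s) (Or.inr h2s.le)).tendsto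
    rw [Real.zero_rpow h2s.ne'] at this
    exact this.mono_left nhdsWithin_le_nhds
  have hc : Filter.Tendsto (fun h : ℝ => 2 * (-(α * h ^ (2 + 2*s))) * (α / h ^ 2))
      (nhdsWithin 0 (Set.Ioi 0)) (nhds 0) := by
    have haux : Filter.Tendsto (fun h : ℝ => -(2*α^2) * h ^ (2*s))
        (nhdsWithin 0 (Set.Ioi 0)) (nhds 0) := by
      have h2s' : (0:ℝ) < 2*s := by linarith
      have t1 : Filter.Tendsto (fun x : ℝ => x ^ (2*s)) (nhdsWithin 0 (Set.Ioi 0)) (nhds 0) := by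
        have := (Real.continuousAt_rpow_const 0 (2*s) (Or.inr h2s'.le)).tendsto
        rw [Real.zero_rpow h2s'.ne'] at this
        exact this.mono_left nhdsWithin_le_nhds
      simpa using t1.const_mul (-(2*α^2))
    refine haux.congr' ?_
    filter_upwards [self_mem_nhdsWithin] with h hh
    have hh' : (0:ℝ) < h := hh
    have hsplit : h ^ (2 + 2*s) = h ^ 2 * h ^ (2*s) := by
      rw [Real.rpow_add hh']
      congr 1
      rw [← Real.rpow_natCast h 2]
      norm_num
    rw [hsplit]
    field_simp
  have hφt : Filter.Tendsto φ (nhdsWithin 0 (Set.Ioi 0)) (nhds ((0:ℝ), (0:ℝ))) := by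
    rw [Prod.tendsto_iff]
    exact ⟨hσ, hc⟩
  have hd1 : detL α J (0, 0) = 1 := by
    simp [detL, Lop_zero]
  have hev : ∀ᶠ p in nhds ((0:ℝ), (0:ℝ)), detL α J p ≠ 0 :=
    (continuous_detL α J).continuousAt.eventually_ne (by rw [hd1]; norm_num)
  have hev2 : ∀ᶠ h in nhdsWithin 0 (Set.Ioi 0), detL α J (φ h) ≠ 0 := hφt.eventually hev
  rw [Filter.eventually_iff, mem_nhdsGT_iff_exists_Ioo_subset] at hev2
  obtain ⟨u, hu, hsub⟩ := hev2
  refine ⟨u, hu, fun h h0 h1 => ?_⟩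
  have hdet : LinearMap.det (Lop α J (φ h).1 (φ h).2) ≠ 0 := hsub ⟨h0, h1⟩
  have := (LinearMap.equivOfDetNeZero _ hdet).bijective
  exact this
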